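/- arXiv:2602.11482 — 8 statements merged into one kernel-verified Lean document; each statement's English description precedes it below -/
import Mathlib

section
/- For all real γ > τ > 0, the firm-shrinkage operator equals the external division of two soft-shrinkage operators: firm_{τ,γ}(x) = (γ/(γ−τ))·soft_τ(x) − (τ/(γ−τ))·soft_γ(x) for every x ∈ ℝ. -/
noncomputable def soft (γ x : ℝ) : ℝ := Real.sign x * max (|x| - γ) 0

noncomputable def firm (τ γ x : ℝ) : ℝ :=
  if γ ≤ |x| then x
  else if τ ≤ |x| then Real.sign x * (γ * (|x| - τ) / (γ - τ))
  else 0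

/-- The firm-shrinkage operator is the external division of two soft-shrinkage operators. -/
theorem stmt1 (τ γ : ℝ) (hτ : 0 < τ) (hτγ : τ < γ) (x : ℝ) :
    firm τ γ x = (γ / (γ - τ)) * soft τ x - (τ / (γ - τ)) * soft γ x := by
  have hd : γ - τ ≠ 0 := by linarith
  have hsabs : Real.sign x * |x| = x := by
    rcases lt_trichotomy x 0 with h | h | h
    · rw [Real.sign_of_neg h, abs_of_neg h]; ring
    · simp [h]
    · rw [Real.sign_of_pos h, abs_of_pos h]; ring
  unfold firm soft
  by_cases h1 : γ ≤ |x|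
  · rw [if_pos h1, max_eq_left (by linarith), max_eq_left (by linarith)]
    field_simp
    nlinarith [hsabs]
  · rw [if_neg h1]
    push_neg at h1
    rw [max_eq_right (show |x| - γ ≤ 0 by linarith)]
    by_cases h2 : τ ≤ |x|
    · rw [if_pos h2, max_eq_left (show (0:ℝ) ≤ |x| - τ by linarith)]
      field_simp
      ring
    · rw [if_neg h2]
      push_neg at h2
      rw [max_eq_right (show |x| - τ ≤ 0 by linarith)]
      ring
end

section
/- Let h(x) = x·log x on ℝ₊ (with h(0) = 0) be the scalar Boltzmann–Shannon entropy, let a > 0, η > 0, and x > 0. Then the Bregman proximity operator Prox^h_{η|·−a|}(x) := argmin_{ξ ≥ 0} ( η|ξ−a| + D_h(ξ,x) ) equals: e^η·x if 0 < x < a·e^{−η}; a if a·e^{−η} ≤ x ≤ a·e^{η}; e^{−η}·x if x > a·e^{η}. Here D_h(ξ,x) = ξ log ξ − x log x − (log x + 1)(ξ − x). -/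
/-- Strict Bregman divergence positivity for x log x. -/
lemma bregman_strict (p ξ : ℝ) (hp : 0 < p) (hξ : 0 ≤ ξ) (hne : ξ ≠ p) :
    (Real.log p + 1) * (ξ - p) < ξ * Real.log ξ - p * Real.log p := by
  rcases eq_or_lt_of_le hξ with h0 | h0
  · simp only [← h0, Real.log_zero, mul_zero, zero_mul, zero_sub]
    nlinarith
  · have hq : (0:ℝ) < p / ξ := div_pos hp h0
    have hq1 : p / ξ ≠ 1 := by
      intro h
      exact hne ((div_eq_one_iff_eq h0.ne').mp h).symm
    have hlt := Real.log_lt_sub_one_of_pos hq hq1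
    rw [Real.log_div hp.ne' h0.ne'] at hlt
    have h5 := mul_lt_mul_of_pos_left hlt h0
    have h6 : ξ * (p / ξ - 1) = p - ξ := by field_simp
    rw [h6] at h5
    nlinarith

lemma bregman_nonneg (p ξ : ℝ) (hp : 0 < p) (hξ : 0 ≤ ξ) :
    (Real.log p + 1) * (ξ - p) ≤ ξ * Real.log ξ - p * Real.log p := by
  rcases eq_or_ne ξ p with rfl | hne
  · simp
  · exact (bregman_strict p ξ hp hξ hne).le

/-- The Bregman proximity operator of η|·−a| for the Boltzmann–Shannon entropy h(x) = x log x: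
the stated three-piece point is the unique minimizer over ξ ≥ 0 of η|ξ−a| + D_h(ξ,x). -/
theorem stmt3 (a η x : ℝ) (ha : 0 < a) (hη : 0 < η) (hx : 0 < x) :
    let D : ℝ → ℝ := fun ξ => ξ * Real.log ξ - x * Real.log x - (Real.log x + 1) * (ξ - x)
    let F : ℝ → ℝ := fun ξ => η * |ξ - a| + D ξ
    let p : ℝ := if x < a * Real.exp (-η) then Real.exp η * x
      else if x ≤ a * Real.exp η then a else Real.exp (-η) * x
    (∀ ξ : ℝ, 0 ≤ ξ → F p ≤ F ξ) ∧ (∀ ξ : ℝ, 0 ≤ ξ → F ξ ≤ F p → ξ = p) := by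
  intro D F p
  -- p is positive in all cases
  have hp : 0 < p := by
    unfold p
    split_ifs with h1 h2
    · positivity
    · exact ha
    · positivity
  -- the linear part is nonnegative
  have hlin : ∀ ξ : ℝ, 0 ≤ ξ →
      0 ≤ η * |ξ - a| - η * |p - a| + (Real.log p - Real.log x) * (ξ - p) := by
    intro ξ hξ
    unfold p
    split_ifs with h1 h2
    · -- p = exp η * x, log p - log x = η, p < a
      have hlog : Real.log (Real.exp η * x) - Real.log x = η := by
        rw [Real.log_mul (Real.exp_pos η).ne' hx.ne', Real.log_exp]; ring
      rw [hlog]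
      have hpa : Real.exp η * x < a := by
        have := mul_lt_mul_of_pos_left h1 (Real.exp_pos η)
        calc Real.exp η * x < Real.exp η * (a * Real.exp (-η)) := this
          _ = a := by rw [mul_comm a, ← mul_assoc, ← Real.exp_add]; simp
      have habs : |Real.exp η * x - a| = a - Real.exp η * x := by
        rw [abs_of_nonpos (by linarith)]; ring
      rw [habs]
      have h2 : -(ξ - a) ≤ |ξ - a| := neg_le_abs _
      nlinarith
    · -- p = a, |log a - log x| ≤ η
      have hub : Real.log a - Real.log x ≤ η := by
        have : a * Real.exp (-η) ≤ x := not_lt.mp h1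
        have h3 : Real.log (a * Real.exp (-η)) ≤ Real.log x :=
          Real.log_le_log (by positivity) this
        rw [Real.log_mul ha.ne' (Real.exp_pos _).ne', Real.log_exp] at h3
        linarith
      have hlb : -η ≤ Real.log a - Real.log x := by
        have h3 : Real.log x ≤ Real.log (a * Real.exp η) :=
          Real.log_le_log hx h2
        rw [Real.log_mul ha.ne' (Real.exp_pos _).ne', Real.log_exp] at h3
        linarith
      have habs : |(Real.log a - Real.log x) * (ξ - a)| ≤ η * |ξ - a| := by
        rw [abs_mul]
        exact mul_le_mul_of_nonneg_right (abs_le.mpr ⟨hlb, hub⟩) (abs_nonneg _)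
      have := neg_abs_le ((Real.log a - Real.log x) * (ξ - a))
      simp only [sub_self, abs_zero, mul_zero, sub_zero]
      nlinarith
    · -- p = exp (-η) * x, log p - log x = -η, p > a
      have hlog : Real.log (Real.exp (-η) * x) - Real.log x = -η := by
        rw [Real.log_mul (Real.exp_pos _).ne' hx.ne', Real.log_exp]; ring
      rw [hlog]
      have hpa : a < Real.exp (-η) * x := by
        have hax : a * Real.exp η < x := not_le.mp h2
        have := mul_lt_mul_of_pos_left hax (Real.exp_pos (-η))
        calc a = Real.exp (-η) * (a * Real.exp η) := by
              rw [mul_comm a, ← mul_assoc, ← Real.exp_add]; simp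
          _ < Real.exp (-η) * x := this
      have habs : |Real.exp (-η) * x - a| = Real.exp (-η) * x - a := by
        rw [abs_of_nonneg (by linarith)]
      rw [habs]
      have h3 : (ξ - a) ≤ |ξ - a| := le_abs_self _
      nlinarith
  -- decomposition: F ξ - F p = linear part + Bregman divergence at p
  have hdecomp : ∀ ξ : ℝ, F ξ - F p =
      (η * |ξ - a| - η * |p - a| + (Real.log p - Real.log x) * (ξ - p)) +
      (ξ * Real.log ξ - p * Real.log p - (Real.log p + 1) * (ξ - p)) := by
    intro ξ
    unfold F D
    ring
  have hstrict : ∀ ξ : ℝ, 0 ≤ ξ → ξ ≠ p → F p < F ξ := by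
    intro ξ hξ hne
    have h1 := hlin ξ hξ
    have h2 := bregman_strict p ξ hp hξ hne
    have := hdecomp ξ
    linarith
  constructor
  · intro ξ hξ
    rcases eq_or_ne ξ p with rfl | hne
    · exact le_refl _
    · exact (hstrict ξ hξ hne).le
  · intro ξ hξ hle
    by_contra hne
    exact absurd hle (not_le.mpr (hstrict ξ hξ hne))
end

section
/- Let h(x) = x·log x be the scalar Boltzmann–Shannon entropy, a > 0, η > 0, and set ã = log a + 1. Then for every x > 0: Prox^h_{η|·−a|}(x) = (h^*)'( Prox_{η|·−ã|}( h'(x) ) ), where h'(x) = log x + 1, (h^*)'(u) = e^{u−1}, and Prox_{η|·−ã|}(u) = ã + soft_η(u − ã) is the Euclidean proximity operator of η|·−ã|. -/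
private lemma entropy_lt (q ξ : ℝ) (hq : 0 < q) (hξ : 0 ≤ ξ) (hne : ξ ≠ q) :
    ξ * Real.log q + (ξ - q) < ξ * Real.log ξ := by
  rcases eq_or_lt_of_le hξ with h0 | h0
  · simp [← h0]; linarith
  · have hne1 : q / ξ ≠ 1 := by
      intro h
      apply hne
      field_simp at h
      linarith
    have h1 : Real.log (q / ξ) < q / ξ - 1 :=
      Real.log_lt_sub_one_of_pos (by positivity) hne1
    have h2 : Real.log (q / ξ) = Real.log q - Real.log ξ :=
      Real.log_div hq.ne' h0.ne'
    have h3 : q / ξ * ξ = q := div_mul_cancel₀ _ h0.ne'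
    nlinarith [mul_lt_mul_of_pos_right h1 h0]

private lemma key_lt (a η x q s' ξ : ℝ) (hq : 0 < q) (hs : |s'| ≤ η)
    (hcomp : η * |q - a| = s' * (q - a))
    (hlog : Real.log q = (Real.log x + 1) - 1 - s')
    (hξ : 0 ≤ ξ) (hne : ξ ≠ q) :
    η * |q - a| + (q * Real.log q - x * Real.log x - (Real.log x + 1) * (q - x))
      < η * |ξ - a| + (ξ * Real.log ξ - x * Real.log x - (Real.log x + 1) * (ξ - x)) := by
  have hent : ξ * Real.log q + (ξ - q) < ξ * Real.log ξ := entropy_lt q ξ hq hξ hne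
  have habs : s' * (ξ - a) ≤ η * |ξ - a| := by
    calc s' * (ξ - a) ≤ |s' * (ξ - a)| := le_abs_self _
      _ = |s'| * |ξ - a| := abs_mul _ _
      _ ≤ η * |ξ - a| := mul_le_mul_of_nonneg_right hs (abs_nonneg _)
  have hql : q * Real.log q = q * (Real.log x + 1) - q - q * s' := by
    rw [hlog]; ring
  have hent2 : ξ * ((Real.log x + 1) - 1 - s') + (ξ - q) < ξ * Real.log ξ := by
    rw [← hlog]; exact hent
  nlinarith [hent2, habs, hcomp, hql]

/-- Prox^h_{η|·−a|}(x) = (h^*)'( Prox_{η|·−atil|}( h'(x) ) ) for h(x) = x log x, atil = log a + 1: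
the point e^{Prox_{η|·−atil|}(log x + 1) − 1} is the unique minimizer over ξ ≥ 0 of
η|ξ−a| + D_h(ξ,x), where Prox_{η|·−atil|}(u) = atil + soft_η(u−atil). -/
theorem stmt4 (a η x : ℝ) (ha : 0 < a) (hη : 0 < η) (hx : 0 < x) :
    let atil : ℝ := Real.log a + 1
    let soft : ℝ → ℝ → ℝ := fun η v => Real.sign v * max (|v| - η) 0
    let q : ℝ := Real.exp ((atil + soft η ((Real.log x + 1) - atil)) - 1)
    let D : ℝ → ℝ := fun ξ => ξ * Real.log ξ - x * Real.log x - (Real.log x + 1) * (ξ - x)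
    let F : ℝ → ℝ := fun ξ => η * |ξ - a| + D ξ
    (∀ ξ : ℝ, 0 ≤ ξ → F q ≤ F ξ) ∧ (∀ ξ : ℝ, 0 ≤ ξ → F ξ ≤ F q → ξ = q) := by
  intro atil soft q D F
  have hFdef : ∀ ξ : ℝ, F ξ = η * |ξ - a| +
      (ξ * Real.log ξ - x * Real.log x - (Real.log x + 1) * (ξ - x)) := fun _ => rfl
  set u : ℝ := (Real.log x + 1) - atil with hu
  have hsoftdef : soft η u = Real.sign u * max (|u| - η) 0 := rfl
  have hqdef : q = Real.exp ((atil + soft η u) - 1) := rfl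
  have hq0 : 0 < q := Real.exp_pos _
  have ha' : Real.exp (atil - 1) = a := by
    show Real.exp (Real.log a + 1 - 1) = a
    rw [add_sub_cancel_right, Real.exp_log ha]
  have hlogq : Real.log q = atil + soft η u - 1 := by rw [hqdef, Real.log_exp]
  set s' : ℝ := u - soft η u with hs'
  have hlog : Real.log q = (Real.log x + 1) - 1 - s' := by
    rw [hlogq, hs', hu]; ring
  have hkey : |s'| ≤ η ∧ η * |q - a| = s' * (q - a) := by
    by_cases hcase : |u| ≤ η
    · have hsoft : soft η u = 0 := by
        rw [hsoftdef, max_eq_right (by linarith), mul_zero]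
      have hqa : q = a := by rw [hqdef, hsoft, add_zero, ha']
      constructor
      · rw [hs', hsoft, sub_zero]; exact hcase
      · rw [hqa]; simp
    · push_neg at hcase
      rcases lt_or_ge 0 u with hupos | huneg
      · have habs : |u| = u := abs_of_pos hupos
        have hsoft : soft η u = u - η := by
          rw [hsoftdef, Real.sign_of_pos hupos, one_mul,
            max_eq_left (by rw [habs]; linarith [habs ▸ hcase]), habs]
        have hs'val : s' = η := by rw [hs', hsoft]; ring
        have hqgt : a < q := by
          rw [hqdef, hsoft, ← ha']
          apply Real.exp_lt_exp.mpr
          have : η < u := by rw [← habs]; exact hcase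
          linarith
        constructor
        · rw [hs'val, abs_of_pos hη]
        · rw [hs'val, abs_of_pos (by linarith : (0:ℝ) < q - a)]
      · have huneg' : u < 0 := by
          rcases lt_or_eq_of_le huneg with h | h
          · exact h
          · exfalso; rw [h] at hcase; simp at hcase; linarith
        have habs : |u| = -u := abs_of_neg huneg'
        have hsoft : soft η u = u + η := by
          rw [hsoftdef, Real.sign_of_neg huneg',
            max_eq_left (by rw [habs]; linarith [habs ▸ hcase]), habs]
          ring
        have hs'val : s' = -η := by rw [hs', hsoft]; ring
        have hqlt : q < a := by
          rw [hqdef, hsoft, ← ha']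
          apply Real.exp_lt_exp.mpr
          have : η < -u := by rw [← habs]; exact hcase
          linarith
        constructor
        · rw [hs'val, abs_neg, abs_of_pos hη]
        · rw [hs'val, abs_of_neg (by linarith : q - a < 0)]; ring
  obtain ⟨hs, hcomp⟩ := hkey
  constructor
  · intro ξ hξ
    rcases eq_or_ne ξ q with rfl | hne
    · exact le_refl _
    · rw [hFdef ξ, hFdef q]
      exact le_of_lt (key_lt a η x q s' ξ hq0 hs hcomp hlog hξ hne)
  · intro ξ hξ hle
    by_contra hne
    have := key_lt a η x q s' ξ hq0 hs hcomp hlog hξ hne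
    rw [← hFdef ξ, ← hFdef q] at this
    linarith
end

section
/- Let ω > 1, 0 < η₁, a > 0, and η₂ := log((ω−1)/(ω e^{−η₁} − 1)), and assume ω e^{−η₁} > 1. Define T(x) = ω·P_{η₁}(x) − (ω−1)·P_{η₂}(x) where P_η(x) = e^η x if 0 < x < a e^{−η}, = a if a e^{−η} ≤ x ≤ a e^{η}, = e^{−η} x if x > a e^{η} (the Bregman proximity operator of η|·−a| for the entropy h(x)=x log x). Then with κ := (ω−1)/(ω e^{−η₁} − 1), for every x > 0: T(x) = (ω e^{η₁} − (ω−1)κ)·x if 0 < x < a/κ; = ω e^{η₁} x − (ω−1)a if a/κ ≤ x < a e^{−η₁}; = a if a e^{−η₁} ≤ x ≤ a e^{η₁}; = ω e^{−η₁} x − (ω−1)a if a e^{η₁} < x ≤ aκ; = x if x > aκ. -/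
/-- Scalar Bregman proximity operator of η|·−a| for the entropy h(x) = x log x. -/
noncomputable def bregProx (a η x : ℝ) : ℝ :=
  if x < a * Real.exp (-η) then Real.exp η * x
  else if x ≤ a * Real.exp η then a else Real.exp (-η) * x

/-- Explicit five-piece form of the external division of two Bregman proximity operators. -/
theorem stmt5 (ω η₁ a : ℝ) (hω : 1 < ω) (hη₁ : 0 < η₁) (ha : 0 < a)
    (hωη : 1 < ω * Real.exp (-η₁)) (x : ℝ) (hx : 0 < x) :
    let η₂ : ℝ := Real.log ((ω - 1) / (ω * Real.exp (-η₁) - 1))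
    let κ : ℝ := (ω - 1) / (ω * Real.exp (-η₁) - 1)
    let T : ℝ := ω * bregProx a η₁ x - (ω - 1) * bregProx a η₂ x
    (x < a / κ → T = (ω * Real.exp η₁ - (ω - 1) * κ) * x) ∧
    (a / κ ≤ x → x < a * Real.exp (-η₁) → T = ω * Real.exp η₁ * x - (ω - 1) * a) ∧
    (a * Real.exp (-η₁) ≤ x → x ≤ a * Real.exp η₁ → T = a) ∧
    (a * Real.exp η₁ < x → x ≤ a * κ → T = ω * Real.exp (-η₁) * x - (ω - 1) * a) ∧
    (a * κ < x → T = x) := by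
  intro η₂ κ T
  have hE1 : 1 < Real.exp η₁ := by nlinarith [Real.add_one_le_exp η₁]
  have hEpos : 0 < Real.exp η₁ := Real.exp_pos _
  have hE'pos : 0 < Real.exp (-η₁) := Real.exp_pos _
  have hmul : Real.exp η₁ * Real.exp (-η₁) = 1 := by
    rw [← Real.exp_add]; simp
  have hden : 0 < ω * Real.exp (-η₁) - 1 := by linarith
  have hκpos : 0 < κ := div_pos (by linarith) hden
  have hkey : κ * (ω * Real.exp (-η₁) - 1) = ω - 1 := div_mul_cancel₀ _ (ne_of_gt hden)
  have hEκ : Real.exp η₁ < κ := by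
    rw [show κ = (ω - 1) / (ω * Real.exp (-η₁) - 1) from rfl, lt_div_iff₀ hden]
    nlinarith
  have hκ1 : 1 < κ := lt_trans hE1 hEκ
  have he2 : Real.exp η₂ = κ := Real.exp_log hκpos
  have he2' : Real.exp (-η₂) = κ⁻¹ := by rw [Real.exp_neg, he2]
  have hT : T = ω * bregProx a η₁ x - (ω - 1) * bregProx a η₂ x := rfl
  have hthr : a / κ < a * Real.exp (-η₁) := by
    rw [div_lt_iff₀ hκpos]
    nlinarith
  have hE'1 : Real.exp (-η₁) < 1 := by nlinarith
  refine ⟨?_, ?_, ?_, ?_, ?_⟩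
  · intro h1
    have p2 : bregProx a η₂ x = κ * x := by
      rw [bregProx, if_pos (by rw [he2', ← div_eq_mul_inv]; exact h1), he2]
    have p1 : bregProx a η₁ x = Real.exp η₁ * x := by
      rw [bregProx, if_pos (lt_trans h1 hthr)]
    rw [hT, p1, p2]; ring
  · intro h1 h2
    have p1 : bregProx a η₁ x = Real.exp η₁ * x := by rw [bregProx, if_pos h2]
    have p2 : bregProx a η₂ x = a := by
      have h2a : ¬ x < a * Real.exp (-η₂) := by
        rw [he2', ← div_eq_mul_inv]; exact not_lt.mpr h1
      have h2b : x ≤ a * Real.exp η₂ := by rw [he2]; nlinarith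
      rw [bregProx, if_neg h2a, if_pos h2b]
    rw [hT, p1, p2]; ring
  · intro h1 h2
    have p1 : bregProx a η₁ x = a := by rw [bregProx, if_neg (not_lt.mpr h1), if_pos h2]
    have p2 : bregProx a η₂ x = a := by
      have h2a : ¬ x < a * Real.exp (-η₂) := by
        rw [he2', ← div_eq_mul_inv]; exact not_lt.mpr (le_trans hthr.le h1)
      have h2b : x ≤ a * Real.exp η₂ := by rw [he2]; nlinarith
      rw [bregProx, if_neg h2a, if_pos h2b]
    rw [hT, p1, p2]; ring
  · intro h1 h2
    have hlow : a * Real.exp (-η₁) < x := by nlinarith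
    have p1 : bregProx a η₁ x = Real.exp (-η₁) * x := by
      rw [bregProx, if_neg (not_lt.mpr hlow.le), if_neg (not_le.mpr h1)]
    have p2 : bregProx a η₂ x = a := by
      have h2a : ¬ x < a * Real.exp (-η₂) := by
        rw [he2', ← div_eq_mul_inv]
        exact not_lt.mpr (le_trans hthr.le hlow.le)
      have h2b : x ≤ a * Real.exp η₂ := by rw [he2]; exact h2
      rw [bregProx, if_neg h2a, if_pos h2b]
    rw [hT, p1, p2]; ring
  · intro h1
    have hlow : a * Real.exp η₁ < x := by nlinarith
    have hlow' : a * Real.exp (-η₁) < x := by nlinarith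
    have p1 : bregProx a η₁ x = Real.exp (-η₁) * x := by
      rw [bregProx, if_neg (not_lt.mpr hlow'.le), if_neg (not_le.mpr hlow)]
    have p2 : bregProx a η₂ x = κ⁻¹ * x := by
      have h2a : ¬ x < a * Real.exp (-η₂) := by
        rw [he2', ← div_eq_mul_inv]
        refine not_lt.mpr (le_trans ?_ (le_trans hthr.le hlow'.le))
        rfl
      have h2b : ¬ x ≤ a * Real.exp η₂ := by rw [he2]; exact not_le.mpr h1
      rw [bregProx, if_neg h2a, if_neg h2b, he2']
    have h5 : (ω - 1) * κ⁻¹ = ω * Real.exp (-η₁) - 1 := by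
      rw [← hkey]; field_simp
    have h5x : (ω - 1) * (κ⁻¹ * x) = (ω * Real.exp (-η₁) - 1) * x := by
      rw [← mul_assoc, h5]
    rw [hT, p1, p2, h5x]; ring
end

section
/- Let ω > 1, η₁ > 0 with ω e^{−η₁} > 1, a > 0, η₂ := log((ω−1)/(ω e^{−η₁}−1)), and κ := (ω−1)/(ω e^{−η₁}−1). Then for every x > a·κ, the external-division operator satisfies T_{ω,η₁,η₂,a}(x) = x; i.e., it acts as the identity on sufficiently large inputs. -/
/-- The external-division operator acts as the identity on sufficiently large inputs. -/
theorem stmt6 (ω η₁ a : ℝ) (hω : 1 < ω) (hη₁ : 0 < η₁) (ha : 0 < a)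
    (hωη : 1 < ω * Real.exp (-η₁)) (x : ℝ)
    (hx : a * ((ω - 1) / (ω * Real.exp (-η₁) - 1)) < x) :
    ω * bregProx a η₁ x -
      (ω - 1) * bregProx a (Real.log ((ω - 1) / (ω * Real.exp (-η₁) - 1))) x = x := by
  set D : ℝ := ω * Real.exp (-η₁) - 1 with hD
  have hDpos : 0 < D := by simp [hD]; linarith
  have hωpos : 0 < ω - 1 := by linarith
  have hκpos : 0 < (ω - 1) / D := div_pos hωpos hDpos
  have he1 : 1 < Real.exp η₁ := by
    simpa using Real.exp_lt_exp.mpr hη₁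
  -- κ > exp η₁
  have hκgt : Real.exp η₁ < (ω - 1) / D := by
    rw [lt_div_iff₀ hDpos]
    have : Real.exp η₁ * D = ω - Real.exp η₁ := by
      have : Real.exp η₁ * Real.exp (-η₁) = 1 := by
        rw [← Real.exp_add]; simp
      rw [hD]; ring_nf; nlinarith [this]
    rw [this]; linarith
  have hx1 : a * Real.exp η₁ < x := by
    calc a * Real.exp η₁ < a * ((ω - 1) / D) := by
          exact (mul_lt_mul_iff_right₀ ha).mpr hκgt
      _ < x := hx
  have hax : a * Real.exp (-η₁) < x := by
    have : Real.exp (-η₁) < Real.exp η₁ := Real.exp_lt_exp.mpr (by linarith)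
    nlinarith
  have hexplog : Real.exp (Real.log ((ω - 1) / D)) = (ω - 1) / D :=
    Real.exp_log hκpos
  have hexpneg : Real.exp (-Real.log ((ω - 1) / D)) = D / (ω - 1) := by
    rw [Real.exp_neg, hexplog, inv_div]
  have hb1 : bregProx a η₁ x = Real.exp (-η₁) * x := by
    unfold bregProx
    rw [if_neg (by linarith), if_neg (by linarith)]
  have hb2 : bregProx a (Real.log ((ω - 1) / D)) x = D / (ω - 1) * x := by
    unfold bregProx
    rw [hexplog, hexpneg]
    have hDlt : D / (ω - 1) < 1 := by
      rw [div_lt_one hωpos, hD]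
      nlinarith [Real.exp_lt_exp.mpr (neg_lt_zero.mpr hη₁), Real.exp_zero]
    have hκgt1 : 1 < (ω - 1) / D := lt_trans he1 hκgt
    rw [if_neg, if_neg]
    · push_neg; nlinarith
    · push_neg; nlinarith
  rw [hb1, hb2]
  field_simp
  ring
end

section
/- For the scalar Boltzmann–Shannon entropy h(x) = x log x, let a > 0, ã = log a + 1, ω > 1, η₂ > η₁ > 0. Define S₁(u) = Prox_{η₁|·−ã|}(u) = ã + soft_{η₁}(u−ã), S₂(u) = Prox_{η₂|·−ã|}(u) + log((ω−1)/ω), and S(u) = S₁(u) + log( ω(1 − exp(S₂(u) − S₁(u))) ). Then for every x ≥ a e^{−η₁}: ω·Prox^h_{η₁|·−a|}(x) − (ω−1)·Prox^h_{η₂|·−a|}(x) = (h^*)'( S( h'(x) ) ), where h'(x) = log x + 1 and (h^*)'(u) = e^{u−1}. Moreover the assumption x ≥ a e^{−η₁} together with η₂ > η₁ ensures 1 − exp(S₂(h'(x)) − S₁(h'(x))) > 0, so S(h'(x)) is well defined. -/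
lemma prox_eq (a η x : ℝ) (ha : 0 < a) (hη : 0 < η) (hx : a * Real.exp (-η) ≤ x) :
    (if x < a * Real.exp (-η) then Real.exp η * x
      else if x ≤ a * Real.exp η then a else Real.exp (-η) * x)
    = a * Real.exp (Real.sign (Real.log x - Real.log a) *
        max (|Real.log x - Real.log a| - η) 0) := by
  have hx0 : 0 < x := lt_of_lt_of_le (by positivity) hx
  have hvlb : -η ≤ Real.log x - Real.log a := by
    have h1 : Real.log (a * Real.exp (-η)) ≤ Real.log x := Real.log_le_log (by positivity) hx
    rw [Real.log_mul (ne_of_gt ha) (Real.exp_ne_zero _), Real.log_exp] at h1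
    linarith
  rw [if_neg (not_lt.mpr hx)]
  by_cases h : x ≤ a * Real.exp η
  · rw [if_pos h]
    have hub : Real.log x - Real.log a ≤ η := by
      have h1 : Real.log x ≤ Real.log (a * Real.exp η) := Real.log_le_log hx0 h
      rw [Real.log_mul (ne_of_gt ha) (Real.exp_ne_zero _), Real.log_exp] at h1
      linarith
    have habs : |Real.log x - Real.log a| ≤ η := abs_le.mpr ⟨hvlb, hub⟩
    rw [max_eq_right (by linarith), mul_zero, Real.exp_zero, mul_one]
  · rw [if_neg h]
    push_neg at h
    have hub : η < Real.log x - Real.log a := by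
      have h1 : Real.log (a * Real.exp η) < Real.log x := Real.log_lt_log (by positivity) h
      rw [Real.log_mul (ne_of_gt ha) (Real.exp_ne_zero _), Real.log_exp] at h1
      linarith
    rw [Real.sign_of_pos (by linarith : (0:ℝ) < Real.log x - Real.log a),
      abs_of_pos (by linarith : (0:ℝ) < Real.log x - Real.log a),
      max_eq_left (by linarith), one_mul]
    rw [show Real.log x - Real.log a - η = Real.log (x / a) + (-η) by
      rw [Real.log_div (ne_of_gt hx0) (ne_of_gt ha)]; ring,
      Real.exp_add, Real.exp_log (by positivity)]
    field_simp

lemma soft_mono (η₁ η₂ v : ℝ) (hη₁ : 0 < η₁) (h12 : η₁ < η₂) (hv : -η₁ ≤ v) :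
    Real.sign v * max (|v| - η₂) 0 ≤ Real.sign v * max (|v| - η₁) 0 := by
  rcases le_or_gt v η₁ with h | h
  · have habs : |v| ≤ η₁ := abs_le.mpr ⟨hv, h⟩
    rw [max_eq_right (by linarith), max_eq_right (by linarith)]
  · rw [Real.sign_of_pos (by linarith), one_mul, one_mul,
      abs_of_pos (by linarith)]
    exact max_le (le_trans (by linarith : v - η₂ ≤ v - η₁) (le_max_left _ _)) (le_max_right _ _)

/-- Dual-space reformulation of the external-division operator:
for x ≥ a e^{−η₁}, T(x) = (h^*)'(S(h'(x))) and the argument of the logarithm is positive. -/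
theorem stmt13 (a ω η₁ η₂ x : ℝ) (ha : 0 < a) (hω : 1 < ω) (hη₁ : 0 < η₁)
    (h12 : η₁ < η₂) (hx : a * Real.exp (-η₁) ≤ x) :
    let atil : ℝ := Real.log a + 1
    let soft : ℝ → ℝ → ℝ := fun η v => Real.sign v * max (|v| - η) 0
    let P : ℝ → ℝ := fun η => if x < a * Real.exp (-η) then Real.exp η * x
      else if x ≤ a * Real.exp η then a else Real.exp (-η) * x
    let S₁ : ℝ → ℝ := fun u => atil + soft η₁ (u - atil)
    let S₂ : ℝ → ℝ := fun u => (atil + soft η₂ (u - atil)) + Real.log ((ω - 1) / ω)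
    let S : ℝ → ℝ := fun u => S₁ u + Real.log (ω * (1 - Real.exp (S₂ u - S₁ u)))
    0 < 1 - Real.exp (S₂ (Real.log x + 1) - S₁ (Real.log x + 1)) ∧
    ω * P η₁ - (ω - 1) * P η₂ = Real.exp (S (Real.log x + 1) - 1) := by
  intro atil soft P S₁ S₂ S
  have hx0 : 0 < x := lt_of_lt_of_le (by positivity) hx
  have hvdef : Real.log x + 1 - atil = Real.log x - Real.log a := by simp only [atil]; ring
  set v : ℝ := Real.log x - Real.log a with hv
  have hvlb : -η₁ ≤ v := by
    have h1 : Real.log (a * Real.exp (-η₁)) ≤ Real.log x := Real.log_le_log (by positivity) hx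
    rw [Real.log_mul (ne_of_gt ha) (Real.exp_ne_zero _), Real.log_exp] at h1
    simp only [hv]; linarith
  have hlogneg : Real.log ((ω - 1) / ω) < 0 := by
    apply Real.log_neg (div_pos (by linarith) (by linarith))
    rw [div_lt_one (by linarith)]; linarith
  have hdiff : S₂ (Real.log x + 1) - S₁ (Real.log x + 1)
      = (soft η₂ v - soft η₁ v) + Real.log ((ω - 1) / ω) := by
    simp only [S₁, S₂, hvdef]; ring
  have hmono := soft_mono η₁ η₂ v hη₁ h12 hvlb
  have hneg : S₂ (Real.log x + 1) - S₁ (Real.log x + 1) < 0 := by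
    rw [hdiff]; simp only [soft] at hmono ⊢; linarith
  have hpos : 0 < 1 - Real.exp (S₂ (Real.log x + 1) - S₁ (Real.log x + 1)) := by
    have := Real.exp_lt_one_iff.mpr hneg
    linarith
  refine ⟨hpos, ?_⟩
  have hx2 : a * Real.exp (-η₂) ≤ x := by
    calc a * Real.exp (-η₂) ≤ a * Real.exp (-η₁) := by
          apply mul_le_mul_of_nonneg_left (Real.exp_le_exp.mpr (by linarith)) ha.le
      _ ≤ x := hx
  have hP1 : P η₁ = a * Real.exp (soft η₁ v) := by
    simpa [P, soft, hv] using prox_eq a η₁ x ha hη₁ hx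
  have hP2 : P η₂ = a * Real.exp (soft η₂ v) := by
    simpa [P, soft, hv] using prox_eq a η₂ x ha (by linarith) hx2
  -- expand RHS
  have hS : S (Real.log x + 1) - 1 = (S₁ (Real.log x + 1) - 1)
      + Real.log (ω * (1 - Real.exp (S₂ (Real.log x + 1) - S₁ (Real.log x + 1)))) := by
    simp only [S]; ring
  rw [hS, Real.exp_add, Real.exp_log (mul_pos (by linarith : (0:ℝ) < ω) hpos)]
  have hE1 : Real.exp (S₁ (Real.log x + 1) - 1) = a * Real.exp (soft η₁ v) := by
    simp only [S₁, hvdef, atil]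
    rw [show Real.log a + 1 + soft η₁ v - 1 = Real.log a + soft η₁ v by ring,
      Real.exp_add, Real.exp_log ha]
  have hE2 : Real.exp (S₁ (Real.log x + 1) - 1) *
      Real.exp (S₂ (Real.log x + 1) - S₁ (Real.log x + 1))
      = a * Real.exp (soft η₂ v) * ((ω - 1) / ω) := by
    rw [← Real.exp_add]
    have : S₁ (Real.log x + 1) - 1 + (S₂ (Real.log x + 1) - S₁ (Real.log x + 1))
        = (Real.log a + soft η₂ v) + Real.log ((ω - 1) / ω) := by
      simp only [S₁, S₂, hvdef, atil]; ring
    rw [this, Real.exp_add, Real.exp_add, Real.exp_log ha, Real.exp_log (div_pos (by linarith : (0:ℝ) < ω - 1) (by linarith : (0:ℝ) < ω))]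
  rw [hP1, hP2, hE1]
  set E := Real.exp (S₂ (Real.log x + 1) - S₁ (Real.log x + 1)) with hE
  have key : (a * Real.exp (soft η₁ v)) * E = a * Real.exp (soft η₂ v) * ((ω - 1) / ω) := by
    rw [← hE1]; exact hE2
  have key2 : ω * ((a * Real.exp (soft η₁ v)) * E) = (ω - 1) * (a * Real.exp (soft η₂ v)) := by
    rw [key]; field_simp
  linear_combination key2
end

section
/- For the Boltzmann–Shannon entropy h(ξ) = ξ log ξ, a > 0, η > 0, and any x > 0, the point p := Prox^h_{η|·−a|}(x) (given by the three-piece formula e^η x, a, e^{−η} x) satisfies the first-order optimality condition for min_{ξ>0} ( η|ξ−a| + D_h(ξ,x) ): there exists s ∈ ∂|·−a|(p) (so s ∈ {−1,1} if p ≠ a and s ∈ [−1,1] if p = a) with η·s + log p − log x = 0. -/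
/-!
Writing `t = log x - log a`, the three pieces of the formula are the cases `t < -η`, `|t| ≤ η`
and `η < t`. In the outer cases `p = e^{±η} x` lies strictly on one side of `a`, so the
subgradient is the sign `∓1` and `log p - log x = ±η`. In the middle case `p = a`, and
`s = t / η` lies in `[-1, 1]` precisely because `|t| ≤ η`.
-/

open Real Set

/-- The condition `0 ∈ η ∂|· - a|(p) + ∂_ξ D_h(p, x)` for the entropy `h(ξ) = ξ log ξ`. -/
def EntropyProxOptimality (a η x p : ℝ) : Prop :=
  ∃ s : ℝ, (p ≠ a → s = Real.sign (p - a)) ∧ (p = a → s ∈ Icc (-1 : ℝ) 1) ∧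
    η * s + Real.log p - Real.log x = 0

namespace EntropyProxOptimality

variable {a η x p : ℝ}

theorem of_ne (hpa : p ≠ a) (h : η * Real.sign (p - a) + log p - log x = 0) :
    EntropyProxOptimality a η x p :=
  ⟨Real.sign (p - a), fun _ => rfl, fun hpa' => absurd hpa' hpa, h⟩

theorem of_abs_log_sub_log_le (hη : 0 < η) (h : |log x - log a| ≤ η) :
    EntropyProxOptimality a η x a := by
  obtain ⟨hlo, hhi⟩ := abs_le.mp h
  refine ⟨(log x - log a) / η, fun hne => absurd rfl hne, fun _ => ⟨?_, ?_⟩, ?_⟩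
  · rwa [le_div_iff₀ hη, neg_one_mul]
  · rwa [div_le_iff₀ hη, one_mul]
  · field_simp
    ring

end EntropyProxOptimality

theorem log_exp_mul (t : ℝ) {x : ℝ} (hx : 0 < x) : log (exp t * x) = t + log x := by
  rw [log_mul (exp_ne_zero t) hx.ne', log_exp]

theorem exp_mul_lt_of_lt_mul_exp_neg {a t x : ℝ} (h : x < a * exp (-t)) : exp t * x < a :=
  calc exp t * x < exp t * (a * exp (-t)) := by gcongr
    _ = a := by rw [mul_left_comm, ← exp_add, add_neg_cancel, exp_zero, mul_one]

theorem lt_exp_neg_mul_of_mul_exp_lt {a t x : ℝ} (h : a * exp t < x) : a < exp (-t) * x :=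
  calc a = exp (-t) * (a * exp t) := by
        rw [mul_left_comm, ← exp_add, neg_add_cancel, exp_zero, mul_one]
    _ < exp (-t) * x := by gcongr

theorem abs_log_sub_log_le_of_mem_Icc {a t x : ℝ} (ha : 0 < a)
    (h : x ∈ Icc (a * exp (-t)) (a * exp t)) : |log x - log a| ≤ t := by
  have hlo : log (a * exp (-t)) ≤ log x := log_le_log (by positivity) h.1
  have hhi : log x ≤ log (a * exp t) := log_le_log (lt_of_lt_of_le (by positivity) h.1) h.2
  rw [mul_comm, log_exp_mul _ ha] at hlo hhi
  exact abs_le.mpr ⟨by linarith, by linarith⟩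

/-- First-order optimality condition for the scalar Bregman proximity operator:
the three-piece point p satisfies η·s + log p − log x = 0 for some subgradient
s ∈ ∂|·−a|(p). -/
theorem stmt18 (a η x : ℝ) (ha : 0 < a) (hη : 0 < η) (hx : 0 < x) :
    let p : ℝ := if x < a * Real.exp (-η) then Real.exp η * x
      else if x ≤ a * Real.exp η then a else Real.exp (-η) * x
    ∃ s : ℝ, (p ≠ a → s = Real.sign (p - a)) ∧ (p = a → s ∈ Set.Icc (-1 : ℝ) 1) ∧
      η * s + Real.log p - Real.log x = 0 := by
  show EntropyProxOptimality a η x _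
  split_ifs with hbelow habove
  · have hp : exp η * x < a := exp_mul_lt_of_lt_mul_exp_neg hbelow
    refine .of_ne hp.ne ?_
    rw [Real.sign_of_neg (sub_neg.mpr hp), log_exp_mul _ hx]
    ring
  · exact .of_abs_log_sub_log_le hη
      (abs_log_sub_log_le_of_mem_Icc ha ⟨not_lt.mp hbelow, habove⟩)
  · have hp : a < exp (-η) * x := lt_exp_neg_mul_of_mul_exp_lt (not_le.mp habove)
    refine .of_ne hp.ne' ?_
    rw [Real.sign_of_pos (sub_pos.mpr hp), log_exp_mul _ hx]
    ring
end

section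
/- Let h(x) = Σᵢ xᵢ log xᵢ be the Boltzmann–Shannon entropy on ℝⁿ₊, a > 0, η > 0, and ã = log a + 1. Then the n-dimensional Bregman proximity operator factorizes coordinatewise and satisfies Prox^h_{η‖·−a𝟙‖₁} = ∇h^* ∘ Prox_{η‖·−ã𝟙‖₁} ∘ ∇h on ℝⁿ₊₊, where [∇h(x)]ᵢ = log xᵢ + 1, [∇h^*(u)]ᵢ = e^{uᵢ−1}, and Prox_{η‖·−ã𝟙‖₁}(u) has i-th coordinate ã + soft_η(uᵢ − ã). -/
/-!
Both the objective and the constraint `ξ ≥ 0` are separable, so it suffices to treat one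
coordinate. There, the Bregman three-point identity
`D(t, x) = D(t, q) + D(q, x) + (log q - log x) (t - q)` splits the comparison of `q` with `t`
into the strictly positive term `D(t, q)` and
`η |t - a| - η |q - a| - c (t - q)` with `c = log x - log q`. Since `log q = log a + s` with
`s` the soft thresholding of `log x - log a`, the number `c` is a subgradient of `η |· - a|` at
`q`, which makes the second term nonnegative.
-/

open Real

noncomputable section

/-- `D_h(t, x)` for `h(t) = t log t`. -/
def entropyBregman (t x : ℝ) : ℝ := t * log t - x * log x - (log x + 1) * (t - x)

def softThreshold (η v : ℝ) : ℝ := Real.sign v * max (|v| - η) 0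

end

theorem entropyBregman_three_point (t q x : ℝ) :
    entropyBregman t x =
      entropyBregman t q + entropyBregman q x + (log q - log x) * (t - q) := by
  unfold entropyBregman
  ring

theorem entropyBregman_pos {t q : ℝ} (hq : 0 < q) (ht : 0 ≤ t) (hne : t ≠ q) :
    0 < entropyBregman t q := by
  unfold entropyBregman
  rcases ht.eq_or_lt with rfl | ht
  · simp only [zero_mul, log_zero, zero_sub]
    linarith
  · have hlog : log (q / t) < q / t - 1 :=
      log_lt_sub_one_of_pos (by positivity) (by rwa [ne_eq, div_eq_one_iff_eq ht.ne', eq_comm])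
    rw [log_div hq.ne' ht.ne', lt_sub_iff_add_lt, lt_div_iff₀ ht] at hlog
    nlinarith

theorem softThreshold_cases {η : ℝ} (hη : 0 ≤ η) (v : ℝ) :
    (|v| ≤ η ∧ softThreshold η v = 0) ∨ (η < v ∧ softThreshold η v = v - η) ∨
      (v < -η ∧ softThreshold η v = v + η) := by
  unfold softThreshold
  rcases le_or_gt |v| η with hv | hv
  · exact Or.inl ⟨hv, by simp [max_eq_right (sub_nonpos.2 hv)]⟩
  rcases lt_abs.1 hv with hv | hv
  · have hv0 : 0 < v := hη.trans_lt hv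
    right; left
    simp [hv, Real.sign_of_pos hv0, abs_of_pos hv0, max_eq_left (sub_nonneg.2 hv.le)]
  · have hv0 : v < 0 := by linarith
    right; right
    refine ⟨by linarith, ?_⟩
    rw [Real.sign_of_neg hv0, abs_of_neg hv0, max_eq_left (by linarith)]
    ring

theorem abs_sub_ge_of_subgradient {η c a q : ℝ} (hc : |c| ≤ η) (hcq : c * (q - a) = η * |q - a|)
    (t : ℝ) : η * |q - a| + c * (t - q) ≤ η * |t - a| :=
  calc η * |q - a| + c * (t - q) = c * (t - a) := by rw [← hcq]; ring
    _ ≤ |c| * |t - a| := by rw [← abs_mul]; exact le_abs_self _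
    _ ≤ η * |t - a| := by gcongr

theorem sub_softThreshold_isSubgradient {η a : ℝ} (hη : 0 ≤ η) (ha : 0 < a) (v : ℝ) :
    |v - softThreshold η v| ≤ η ∧
      (v - softThreshold η v) * (a * exp (softThreshold η v) - a) =
        η * |a * exp (softThreshold η v) - a| := by
  rcases softThreshold_cases hη v with ⟨hv, hs⟩ | ⟨hv, hs⟩ | ⟨hv, hs⟩ <;> rw [hs]
  · simpa using hv
  · have hpos : 0 < a * exp (v - η) - a := by
      nlinarith [one_lt_exp_iff.2 (sub_pos.2 hv)]
    rw [abs_of_pos hpos, sub_sub_cancel, abs_of_nonneg hη]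
    exact ⟨le_rfl, rfl⟩
  · have hneg : a * exp (v + η) - a < 0 := by
      nlinarith [exp_lt_one_iff.2 (show v + η < 0 by linarith)]
    rw [abs_of_neg hneg, sub_add_cancel_left, abs_neg, abs_of_nonneg hη, neg_mul_comm]
    exact ⟨le_rfl, rfl⟩

theorem entropyBregman_prox_lt {a η x q t : ℝ} (ha : 0 < a) (hη : 0 ≤ η)
    (hq : q = exp (log a + 1 + softThreshold η (log x + 1 - (log a + 1)) - 1)) (ht : 0 ≤ t)
    (hne : t ≠ q) : η * |q - a| + entropyBregman q x < η * |t - a| + entropyBregman t x := by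
  set s := softThreshold η (log x - log a)
  replace hq : q = a * exp s := by
    rw [hq, add_sub_add_right_eq_sub, add_sub_right_comm, add_sub_cancel_right, exp_add,
      exp_log ha]
  have hlogq : log q = log a + s := by rw [hq, log_mul ha.ne' (exp_pos s).ne', log_exp]
  obtain ⟨hc, hcq⟩ := sub_softThreshold_isSubgradient hη ha (log x - log a)
  have hsub := abs_sub_ge_of_subgradient hc (q := q) (by rwa [hq]) t
  have hD := entropyBregman_pos (hq ▸ by positivity) ht hne
  rw [entropyBregman_three_point t q x, hlogq]
  linarith

theorem le_of_forall_ne_lt {α M : Type*} [Preorder M] {f : α → M} {S : Set α} {q t : α}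
    (hq : ∀ t ∈ S, t ≠ q → f q < f t) (ht : t ∈ S) : f q ≤ f t := by
  rcases eq_or_ne t q with rfl | h
  · exact le_rfl
  · exact (hq t ht h).le

section Separable

variable {ι α M : Type*} [Fintype ι] [AddCommMonoid M] [LinearOrder M]
  [IsOrderedCancelAddMonoid M] {φ : ι → α → M} {S : Set α} {q ξ : ι → α}

theorem sum_le_sum_of_forall_lt (hq : ∀ i, ∀ t ∈ S, t ≠ q i → φ i (q i) < φ i t)
    (hξ : ∀ i, ξ i ∈ S) : ∑ i, φ i (q i) ≤ ∑ i, φ i (ξ i) :=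
  Finset.sum_le_sum fun i _ ↦ le_of_forall_ne_lt (hq i) (hξ i)

theorem eq_of_sum_le_sum_of_forall_lt (hq : ∀ i, ∀ t ∈ S, t ≠ q i → φ i (q i) < φ i t)
    (hξ : ∀ i, ξ i ∈ S) (hle : ∑ i, φ i (ξ i) ≤ ∑ i, φ i (q i)) : ξ = q := by
  by_contra hne
  obtain ⟨i, hi⟩ := Function.ne_iff.1 hne
  have hlt : ∑ j, φ j (q j) < ∑ j, φ j (ξ j) :=
    Finset.sum_lt_sum (fun j _ ↦ le_of_forall_ne_lt (hq j) (hξ j))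
      ⟨i, Finset.mem_univ i, hq i _ (hξ i) hi⟩
  exact hle.not_gt hlt

end Separable

theorem stmt19_general (n : ℕ) (a η : ℝ) (ha : 0 < a) (hη : 0 < η)
    (x : Fin n → ℝ) :
    let atil : ℝ := Real.log a + 1
    let soft : ℝ → ℝ → ℝ := fun η v => Real.sign v * max (|v| - η) 0
    let q : Fin n → ℝ := fun i =>
      Real.exp ((atil + soft η ((Real.log (x i) + 1) - atil)) - 1)
    let F : (Fin n → ℝ) → ℝ := fun ξ =>
      η * (∑ i, |ξ i - a|) +
        ∑ i, (ξ i * Real.log (ξ i) - x i * Real.log (x i) -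
          (Real.log (x i) + 1) * (ξ i - x i))
    (∀ ξ : Fin n → ℝ, (∀ i, 0 ≤ ξ i) → F q ≤ F ξ) ∧
    (∀ ξ : Fin n → ℝ, (∀ i, 0 ≤ ξ i) → F ξ ≤ F q → ξ = q) := by
  intro atil soft q F
  have hF : ∀ ξ, F ξ = ∑ i, (η * |ξ i - a| + entropyBregman (ξ i) (x i)) := fun ξ ↦ by
    simp only [F, Finset.mul_sum, ← Finset.sum_add_distrib]
    rfl
  have hq : ∀ i, ∀ t ∈ Set.Ici 0, t ≠ q i →
      η * |q i - a| + entropyBregman (q i) (x i) < η * |t - a| + entropyBregman t (x i) :=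
    fun i _ ht hne ↦ entropyBregman_prox_lt ha hη.le rfl ht hne
  refine ⟨fun ξ hξ ↦ ?_, fun ξ hξ hle ↦ ?_⟩
  · rw [hF, hF]
    exact sum_le_sum_of_forall_lt (φ := fun i t ↦ η * |t - a| + entropyBregman t (x i)) hq hξ
  · rw [hF, hF] at hle
    exact eq_of_sum_le_sum_of_forall_lt (φ := fun i t ↦ η * |t - a| + entropyBregman t (x i))
      hq hξ hle

/-- The n-dimensional Bregman proximity operator of η‖·−a𝟙‖₁ with respect to the
Boltzmann–Shannon entropy factorizes coordinatewise: the point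
(∇h^* ∘ Prox_{η‖·−atil𝟙‖₁} ∘ ∇h)(x) is the unique minimizer over the nonnegative orthant of
η‖ξ − a𝟙‖₁ + D_h(ξ,x). -/
theorem stmt19 (n : ℕ) (a η : ℝ) (ha : 0 < a) (hη : 0 < η)
    (x : Fin n → ℝ) (hx : ∀ i, 0 < x i) :
    let atil : ℝ := Real.log a + 1
    let soft : ℝ → ℝ → ℝ := fun η v => Real.sign v * max (|v| - η) 0
    let q : Fin n → ℝ := fun i =>
      Real.exp ((atil + soft η ((Real.log (x i) + 1) - atil)) - 1)
    let F : (Fin n → ℝ) → ℝ := fun ξ =>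
      η * (∑ i, |ξ i - a|) +
        ∑ i, (ξ i * Real.log (ξ i) - x i * Real.log (x i) -
          (Real.log (x i) + 1) * (ξ i - x i))
    (∀ ξ : Fin n → ℝ, (∀ i, 0 ≤ ξ i) → F q ≤ F ξ) ∧
    (∀ ξ : Fin n → ℝ, (∀ i, 0 ≤ ξ i) → F ξ ≤ F q → ξ = q) :=
  stmt19_general n a η ha hη x
end
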